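/- Every minimizer of G_ε^(0) with boundary values α_ε, β_ε satisfies the energy bound min G_ε^(0) ≤ ε ω₁ (d_W(α_ε, b) + d_W(β_ε, b)), where ω₁ = max_{[0,T]} ω and d_W is the geodesic distance induced by 2√W. -/

import Mathlib

open Real Set Filter Topology MeasureTheory intervalIntegral

/-- Admissible class: `H¹(0,T)` functions with prescribed boundary values. -/
def Adm (T αv βv : ℝ) (v : ℝ → ℝ) : Prop :=
  ContinuousOn v (Icc 0 T) ∧ DifferentiableOn ℝ v (Ioo 0 T) ∧
  IntervalIntegrable (fun t => (deriv v t) ^ 2) volume 0 T ∧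
  v 0 = αv ∧ v T = βv

/-- The one-dimensional weighted Cahn--Hilliard energy. -/
noncomputable def En (W ω : ℝ → ℝ) (ε T : ℝ) (v : ℝ → ℝ) : ℝ :=
  ∫ t in (0:ℝ)..T, (W (v t) + ε ^ 2 * (deriv v t) ^ 2) * ω t

/-- The geodesic distance induced by `2√W`. -/
noncomputable def dW (W : ℝ → ℝ) (r s : ℝ) : ℝ :=
  |∫ ρ in r..s, 2 * Real.sqrt (W ρ)|

/-!
The minimizer is compared with an explicit competitor: the optimal profile from `αε` to `b`,
solving `ε u' = √W(u)`, glued to the reversed optimal profile from `b` to `βε`. Since `1/√W` is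
integrable, each profile reaches the well `b` within time `ε ∫ a..b, W^{-1/2} < T/2` and then
stays there. Along the competitor the energy is equipartitioned,
`W(u) + ε² u'² = 2 W(u) = 2ε √W(u) |u'|`, so the change of variables `ρ = u t` turns its
unweighted energy into `ε (d_W(αε, b) + d_W(βε, b))`, and the weight costs at most the factor `ω₁`.
-/

theorem StrictMonoOn.exists_continuous_inverse_clamp {τ : ℝ → ℝ} {p q : ℝ} (hpq : p ≤ q)
    (hτc : ContinuousOn τ (Icc p q)) (hτm : StrictMonoOn τ (Icc p q)) :
    ∃ w : ℝ → ℝ, Continuous w ∧ ∀ t, w t ∈ Icc p q ∧ τ (w t) = max (τ p) (min (τ q) t) := by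
  have hτpq : τ p ≤ τ q := hτm.monotoneOn ⟨le_rfl, hpq⟩ ⟨hpq, le_rfl⟩ hpq
  let τ' : Icc p q → Icc (τ p) (τ q) := fun x =>
    ⟨τ x, hτm.monotoneOn ⟨le_rfl, hpq⟩ x.2 x.2.1, hτm.monotoneOn x.2 ⟨hpq, le_rfl⟩ x.2.2⟩
  have hmono : StrictMono τ' := fun x y hxy => hτm x.2 y.2 hxy
  have hsurj : Function.Surjective τ' := by
    rintro ⟨y, hy⟩
    obtain ⟨x, hx, rfl⟩ := hτc.surjOn_Icc (left_mem_Icc.2 hpq) (right_mem_Icc.2 hpq) hy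
    exact ⟨⟨x, hx⟩, rfl⟩
  let e := StrictMono.orderIsoOfSurjective τ' hmono hsurj
  refine ⟨fun t => e.symm (projIcc (τ p) (τ q) hτpq t), ?_, fun t => ⟨(e.symm _).2, ?_⟩⟩
  · fun_prop
  · exact congrArg Subtype.val (e.apply_symm_apply (projIcc (τ p) (τ q) hτpq t))

theorem hasDerivAt_of_eventually_hasDerivAt_of_ne {f g : ℝ → ℝ} {x : ℝ}
    (hfg : ∀ᶠ y in 𝓝[≠] x, HasDerivAt f (g y) y) (hf : ContinuousAt f x)
    (hg : ContinuousAt g x) : HasDerivAt f (g x) x := by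
  have hdiff : DifferentiableOn ℝ f {y | HasDerivAt f (g y) y} := fun y hy =>
    hy.differentiableAt.differentiableWithinAt
  have hderiv : ∀ l ≤ 𝓝[≠] x, Tendsto (deriv f) l (𝓝 (g x)) := fun l hl =>
    (hg.tendsto.mono_left (hl.trans nhdsWithin_le_nhds)).congr'
      (Eventually.mono (hl hfg) fun y hy => hy.deriv.symm)
  have hlt : 𝓝[<] x ≤ 𝓝[≠] x := nhdsWithin_mono _ fun _ hy => ne_of_lt hy
  have hgt : 𝓝[>] x ≤ 𝓝[≠] x := nhdsWithin_mono _ fun _ hy => ne_of_gt hy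
  have hleft : HasDerivWithinAt f (g x) (Iic x) x :=
    hasDerivWithinAt_Iic_of_tendsto_deriv hdiff hf.continuousWithinAt (hlt hfg) (hderiv _ hlt)
  have hright : HasDerivWithinAt f (g x) (Ici x) x :=
    hasDerivWithinAt_Ici_of_tendsto_deriv hdiff hf.continuousWithinAt (hgt hfg) (hderiv _ hgt)
  simpa using hleft.union hright

theorem strictMonoOn_integral_of_pos {f : ℝ → ℝ} {a b : ℝ} (hf : IntervalIntegrable f volume a b)
    (hpos : ∀ x ∈ Ioo a b, 0 < f x) : StrictMonoOn (fun x => ∫ s in a..x, f s) (Icc a b) := by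
  have hsub : ∀ x ∈ Icc a b, ∀ y ∈ Icc a b, IntervalIntegrable f volume x y := fun x hx y hy =>
    hf.mono_set (uIcc_subset_uIcc (Icc_subset_uIcc hx) (Icc_subset_uIcc hy))
  intro x hx y hy hxy
  have hxy_pos : 0 < ∫ s in x..y, f s := intervalIntegral_pos_of_pos_on (hsub x hx y hy)
    (fun z hz => hpos z ⟨hx.1.trans_lt hz.1, hz.2.trans_le hy.2⟩) hxy
  have := integral_interval_sub_left (hsub a (left_mem_Icc.2 (hx.1.trans hx.2)) y hy)
    (hsub a (left_mem_Icc.2 (hx.1.trans hx.2)) x hx)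
  simp only
  linarith

noncomputable def travelTime (W : ℝ → ℝ) (ε a x : ℝ) : ℝ :=
  ε * ∫ s in a..x, (√(W s))⁻¹

section travelTime

variable {W : ℝ → ℝ} {ε a b : ℝ}

theorem travelTime_self : travelTime W ε a a = 0 := by
  simp [travelTime]

theorem strictMonoOn_travelTime (hε : 0 < ε) (hWpos : ∀ x ∈ Ioo a b, 0 < W x)
    (hint : IntervalIntegrable (fun s => (√(W s))⁻¹) volume a b) :
    StrictMonoOn (travelTime W ε a) (Icc a b) := fun _ hx _ hy hxy =>
  mul_lt_mul_of_pos_left (strictMonoOn_integral_of_pos hint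
    (fun z hz => inv_pos.2 (sqrt_pos.2 (hWpos z hz))) hx hy hxy) hε

theorem continuousOn_travelTime (hab : a ≤ b)
    (hint : IntervalIntegrable (fun s => (√(W s))⁻¹) volume a b) :
    ContinuousOn (travelTime W ε a) (Icc a b) := by
  rw [← uIcc_of_le hab]
  exact continuousOn_const.mul (continuousOn_primitive_interval' hint left_mem_uIcc)

theorem hasDerivAt_travelTime (hWc : Continuous W)
    (hint : IntervalIntegrable (fun s => (√(W s))⁻¹) volume a b) {x : ℝ} (hx : x ∈ Icc a b)
    (hWx : 0 < W x) : HasDerivAt (travelTime W ε a) (ε * (√(W x))⁻¹) x :=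
  (integral_hasDerivAt_right (hint.mono_set (uIcc_subset_uIcc_left (Icc_subset_uIcc hx)))
    (continuous_sqrt.comp hWc).measurable.inv.aestronglyMeasurable.stronglyMeasurableAtFilter
    ((continuous_sqrt.comp hWc).continuousAt.inv₀ (sqrt_pos.2 hWx).ne')).const_mul ε

end travelTime

structure IsOptimalProfile (W : ℝ → ℝ) (ε a b L : ℝ) (w : ℝ → ℝ) : Prop where
  continuous : Continuous w
  apply_zero : w 0 = a
  eq_of_le : ∀ t, L ≤ t → w t = b
  hasDerivAt : ∀ t, 0 < t → HasDerivAt w (√(W (w t)) / ε) t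

/-- `w` is the inverse of the travel time. At the arrival time, where `w` reaches the well `b`,
differentiability comes from the derivative `√W(w)/ε` tending to `0`. -/
theorem exists_isOptimalProfile {W : ℝ → ℝ} {ε a b : ℝ} (hε : 0 < ε) (hab : a ≤ b)
    (hWc : Continuous W) (hWb : W b = 0) (hWpos : ∀ x ∈ Ioo a b, 0 < W x)
    (hint : IntervalIntegrable (fun s => (√(W s))⁻¹) volume a b) :
    ∃ w, IsOptimalProfile W ε a b (travelTime W ε a b) w := by
  have hτm := strictMonoOn_travelTime (ε := ε) hε hWpos hint
  obtain ⟨w, hwc, hw⟩ := hτm.exists_continuous_inverse_clamp hab (continuousOn_travelTime hab hint)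
  set τ := travelTime W ε a
  set L := τ b
  have hτa : τ a = 0 := travelTime_self
  have hL : 0 ≤ L := hτa ▸ hτm.monotoneOn (left_mem_Icc.2 hab) (right_mem_Icc.2 hab) hab
  have hinj : ∀ t, ∀ x ∈ Icc a b, τ (w t) = τ x → w t = x := fun t x hx h =>
    hτm.injOn (hw t).1 hx h
  have hτw : ∀ t ∈ Icc 0 L, τ (w t) = t := fun t ht => by
    rw [(hw t).2, hτa, min_eq_right ht.2, max_eq_right ht.1]
  have heq : ∀ t, L ≤ t → w t = b := fun t ht =>
    hinj t b (right_mem_Icc.2 hab) (by rw [(hw t).2, hτa, min_eq_left ht, max_eq_right hL])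
  have hderiv_ne : ∀ t, 0 < t → t ≠ L → HasDerivAt w (√(W (w t)) / ε) t := by
    intro t ht htL
    rcases htL.lt_or_gt with htL | htL
    · have hτwt : τ (w t) = t := hτw t ⟨ht.le, htL.le⟩
      have hWwt : 0 < W (w t) := hWpos _ ⟨lt_of_le_of_ne (hw t).1.1 fun h => by
        rw [← h, hτa] at hτwt; exact ht.ne hτwt, lt_of_le_of_ne (hw t).1.2 fun h => by
        rw [h] at hτwt; exact htL.ne' hτwt⟩
      have hinv := (hasDerivAt_travelTime hWc hint (hw t).1 hWwt).of_local_left_inverse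
        hwc.continuousAt (mul_ne_zero hε.ne' (inv_ne_zero (sqrt_pos.2 hWwt).ne'))
        (eventually_of_mem (Ioo_mem_nhds ht htL) fun y hy => hτw y ⟨hy.1.le, hy.2.le⟩)
      rwa [mul_inv, inv_inv, mul_comm, ← div_eq_mul_inv] at hinv
    · have hconst : w =ᶠ[𝓝 t] fun _ => b :=
        eventually_of_mem (Ioi_mem_nhds htL) fun y hy => heq y (le_of_lt hy)
      rw [heq t htL.le, hWb, sqrt_zero, zero_div]
      exact (hasDerivAt_const t b).congr_of_eventuallyEq hconst
  refine ⟨w, hwc, hinj 0 a (left_mem_Icc.2 hab) (by rw [(hw 0).2, hτa, min_eq_right hL, max_self]),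
    heq, fun t ht => ?_⟩
  rcases eq_or_ne t L with rfl | htL
  · refine hasDerivAt_of_eventually_hasDerivAt_of_ne ?_ hwc.continuousAt
      ((continuous_sqrt.comp (hWc.comp hwc)).div_const ε).continuousAt
    filter_upwards [nhdsWithin_le_nhds (Ioi_mem_nhds ht), self_mem_nhdsWithin] with y hy hyL
      using hderiv_ne y hy hyL
  · exact hderiv_ne t ht htL

theorem IsOptimalProfile.integral_two_mul_comp {W : ℝ → ℝ} {ε a b L : ℝ} {w : ℝ → ℝ}
    (hw : IsOptimalProfile W ε a b L w) (hε : 0 < ε) (hWc : Continuous W) (hWnn : ∀ x, 0 ≤ W x)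
    {c : ℝ} (hc : 0 ≤ c) :
    ∫ t in (0:ℝ)..c, 2 * W (w t) = ε * ∫ ρ in a..w c, 2 * √(W ρ) := by
  have hcov := integral_comp_mul_deriv'' (a := 0) (b := c) (f := w)
    (g := fun ρ => ε * (2 * √(W ρ))) hw.continuous.continuousOn
    (fun t ht => (hw.hasDerivAt t (min_eq_left hc ▸ ht.1)).hasDerivWithinAt)
    ((continuous_sqrt.comp (hWc.comp hw.continuous)).div_const ε).continuousOn (by fun_prop)
  rw [hw.apply_zero, intervalIntegral.integral_const_mul] at hcov
  rw [← hcov]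
  refine integral_congr fun t _ => ?_
  simp only [Function.comp_apply]
  field_simp
  rw [sq_sqrt (hWnn _)]

def IsEquipartition (W : ℝ → ℝ) (ε T : ℝ) (u : ℝ → ℝ) : Prop :=
  ∀ t ∈ Ioo 0 T, DifferentiableAt ℝ u t ∧ ε ^ 2 * deriv u t ^ 2 = W (u t)

section IsEquipartition

variable {W ω u : ℝ → ℝ} {ε T : ℝ}

theorem IsEquipartition.adm {α β : ℝ} (hu : IsEquipartition W ε T u) (hε : ε ≠ 0) (hT : 0 ≤ T)
    (hWc : Continuous W) (huc : Continuous u) (hu0 : u 0 = α) (huT : u T = β) :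
    Adm T α β u := by
  refine ⟨huc.continuousOn, fun t ht => (hu t ht).1.differentiableWithinAt, ?_, hu0, huT⟩
  refine (((hWc.comp huc).div_const (ε ^ 2)).intervalIntegrable 0 T).congr_uIoo ?_
  rw [uIoo_of_le hT]
  intro t ht
  simp only [Function.comp_apply, ← (hu t ht).2]
  field_simp

theorem IsEquipartition.en_le_sSup_mul (hu : IsEquipartition W ε T u) (hT : 0 ≤ T)
    (hWc : Continuous W) (hWnn : ∀ x, 0 ≤ W x) (hωc : ContinuousOn ω (Icc 0 T))
    (huc : Continuous u) :
    En W ω ε T u ≤ sSup (ω '' Icc 0 T) * ∫ t in (0:ℝ)..T, 2 * W (u t) := by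
  have hbdd : BddAbove (ω '' Icc 0 T) := (isCompact_Icc.image_of_continuousOn hωc).bddAbove
  have heq : EqOn (fun t => 2 * W (u t) * ω t)
      (fun t => (W (u t) + ε ^ 2 * deriv u t ^ 2) * ω t) (Ioo 0 T) := fun t ht => by
    simp only [(hu t ht).2]
    ring
  have hWu : Continuous fun t => 2 * W (u t) := by fun_prop
  have hint : IntervalIntegrable (fun t => 2 * W (u t) * ω t) volume 0 T :=
    (hWu.continuousOn.mul hωc).intervalIntegrable_of_Icc hT
  rw [En, ← intervalIntegral.integral_const_mul]
  refine integral_mono_on_of_le_Ioo hT (hint.congr_uIoo (uIoo_of_le hT ▸ heq))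
    ((continuous_const.mul hWu).intervalIntegrable 0 T) fun t ht => ?_
  have hω : ω t ≤ sSup (ω '' Icc 0 T) :=
    le_csSup hbdd (mem_image_of_mem ω (Ioo_subset_Icc_self ht))
  rw [(hu t ht).2]
  nlinarith [hWnn (u t)]

end IsEquipartition

noncomputable def glueProfiles (c T : ℝ) (w₁ w₂ : ℝ → ℝ) (t : ℝ) : ℝ :=
  if t ≤ c then w₁ t else w₂ (T - t)

section glueProfiles

variable {W w₁ w₂ : ℝ → ℝ} {ε α β b L₁ L₂ c T : ℝ}

theorem glueProfiles_of_le {t : ℝ} (ht : t ≤ c) : glueProfiles c T w₁ w₂ t = w₁ t :=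
  if_pos ht

theorem glueProfiles_of_lt {t : ℝ} (ht : c < t) : glueProfiles c T w₁ w₂ t = w₂ (T - t) :=
  if_neg ht.not_ge

theorem glueProfiles_of_mem_Ioo (hw₁ : IsOptimalProfile W ε α b L₁ w₁)
    (hw₂ : IsOptimalProfile W ε β b L₂ w₂) {t : ℝ} (ht : t ∈ Ioo L₁ (T - L₂)) :
    glueProfiles c T w₁ w₂ t = b := by
  rcases le_or_gt t c with htc | htc
  · rw [glueProfiles_of_le htc, hw₁.eq_of_le t ht.1.le]
  · rw [glueProfiles_of_lt htc, hw₂.eq_of_le _ (by linarith [ht.2])]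

theorem continuous_glueProfiles (hw₁ : IsOptimalProfile W ε α b L₁ w₁)
    (hw₂ : IsOptimalProfile W ε β b L₂ w₂) (hc : c ∈ Ioo L₁ (T - L₂)) :
    Continuous (glueProfiles c T w₁ w₂) :=
  Continuous.if_le hw₁.continuous (hw₂.continuous.comp (continuous_const.sub continuous_id))
    continuous_id continuous_const fun t ht => by
      rw [ht, hw₁.eq_of_le c hc.1.le, hw₂.eq_of_le _ (by linarith [hc.2])]

/-- Near `c` both profiles already sit at the well `b`, so the glued function is constant there. -/
theorem isEquipartition_glueProfiles (hε : ε ≠ 0) (hWnn : ∀ x, 0 ≤ W x) (hWb : W b = 0)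
    (hw₁ : IsOptimalProfile W ε α b L₁ w₁) (hw₂ : IsOptimalProfile W ε β b L₂ w₂)
    (hc : c ∈ Ioo L₁ (T - L₂)) : IsEquipartition W ε T (glueProfiles c T w₁ w₂) := by
  set u := glueProfiles c T w₁ w₂
  have hsq : ∀ x, ε ^ 2 * (√(W x) / ε) ^ 2 = W x := fun x => by
    rw [div_pow, sq_sqrt (hWnn x)]; field_simp
  suffices ∀ t ∈ Ioo 0 T, ∃ d, HasDerivAt u d t ∧ ε ^ 2 * d ^ 2 = W (u t) from fun t ht =>
    let ⟨_, hd, hdW⟩ := this t ht; ⟨hd.differentiableAt, hd.deriv ▸ hdW⟩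
  intro t ht
  rcases lt_trichotomy t c with htc | rfl | htc
  · have hloc : u =ᶠ[𝓝 t] w₁ :=
      eventually_of_mem (Iio_mem_nhds htc) fun y hy => glueProfiles_of_le (le_of_lt hy)
    refine ⟨_, (hw₁.hasDerivAt t ht.1).congr_of_eventuallyEq hloc, ?_⟩
    rw [hloc.eq_of_nhds]
    exact hsq _
  · have hloc : u =ᶠ[𝓝 t] fun _ => b :=
      eventually_of_mem (Ioo_mem_nhds hc.1 hc.2) fun y hy => glueProfiles_of_mem_Ioo hw₁ hw₂ hy
    refine ⟨0, (hasDerivAt_const t b).congr_of_eventuallyEq hloc, ?_⟩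
    rw [hloc.eq_of_nhds, hWb]
    ring
  · have hloc : u =ᶠ[𝓝 t] fun y => w₂ (T - y) :=
      eventually_of_mem (Ioi_mem_nhds htc) fun y hy => glueProfiles_of_lt hy
    have hd := (hw₂.hasDerivAt (T - t) (by linarith [ht.2])).scomp t
      ((hasDerivAt_id t).const_sub T)
    refine ⟨_, hd.congr_of_eventuallyEq hloc, ?_⟩
    rw [hloc.eq_of_nhds]
    simpa using hsq _

theorem integral_glueProfiles (hε : 0 < ε) (hWc : Continuous W) (hWnn : ∀ x, 0 ≤ W x)
    (hw₁ : IsOptimalProfile W ε α b L₁ w₁) (hw₂ : IsOptimalProfile W ε β b L₂ w₂)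
    (hL₁ : 0 ≤ L₁) (hL₂ : 0 ≤ L₂) (hc : c ∈ Ioo L₁ (T - L₂)) :
    ∫ t in (0:ℝ)..T, 2 * W (glueProfiles c T w₁ w₂ t) =
      ε * ((∫ ρ in α..b, 2 * √(W ρ)) + ∫ ρ in β..b, 2 * √(W ρ)) := by
  have hc₀ : 0 ≤ c := hL₁.trans hc.1.le
  have hcT : c ≤ T := by linarith [hc.2]
  have hWu : Continuous fun t => 2 * W (glueProfiles c T w₁ w₂ t) :=
    continuous_const.mul (hWc.comp (continuous_glueProfiles hw₁ hw₂ hc))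
  have hleft : ∫ t in (0:ℝ)..c, 2 * W (glueProfiles c T w₁ w₂ t) =
      ε * ∫ ρ in α..b, 2 * √(W ρ) := by
    rw [← hw₁.eq_of_le c hc.1.le, ← hw₁.integral_two_mul_comp hε hWc hWnn hc₀]
    refine integral_congr fun t ht => ?_
    rw [glueProfiles_of_le (uIcc_of_le hc₀ ▸ ht).2]
  have hright : ∫ t in c..T, 2 * W (glueProfiles c T w₁ w₂ t) =
      ε * ∫ ρ in β..b, 2 * √(W ρ) := by
    rw [← hw₂.eq_of_le (T - c) (by linarith [hc.2]),
      ← hw₂.integral_two_mul_comp hε hWc hWnn (sub_nonneg.2 hcT),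
      integral_congr_Ioo_of_le hcT (g := fun t => 2 * W (w₂ (T - t)))
        fun t ht => by rw [glueProfiles_of_lt ht.1],
      intervalIntegral.integral_comp_sub_left (fun s => 2 * W (w₂ s)), sub_self]
  rw [← integral_add_adjacent_intervals (hWu.intervalIntegrable 0 c)
    (hWu.intervalIntegrable c T), hleft, hright, mul_add]

end glueProfiles

theorem exists_isOptimalProfile_of_mem_Icc {W : ℝ → ℝ} {a b ε α : ℝ} (hε : 0 < ε)
    (hWc : Continuous W) (hWnn : ∀ x, 0 ≤ W x) (hzeros : ∀ x, W x = 0 ↔ x = a ∨ x = b)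
    (hint : IntervalIntegrable (fun s => (√(W s))⁻¹) volume a b) (hα : α ∈ Icc a b) :
    ∃ L w, 0 ≤ L ∧ L ≤ ε * ∫ s in a..b, (√(W s))⁻¹ ∧ IsOptimalProfile W ε α b L w := by
  have hWpos : ∀ x ∈ Ioo α b, 0 < W x := fun x hx => (hWnn x).lt_of_ne' fun h => by
    rcases (hzeros x).1 h with rfl | rfl
    exacts [hx.1.not_ge hα.1, hx.2.ne rfl]
  have hsub : ∀ x ∈ Icc a b, ∀ y ∈ Icc a b,
      IntervalIntegrable (fun s => (√(W s))⁻¹) volume x y := fun x hx y hy =>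
    hint.mono_set (uIcc_subset_uIcc (Icc_subset_uIcc hx) (Icc_subset_uIcc hy))
  have hb : b ∈ Icc a b := ⟨hα.1.trans hα.2, le_rfl⟩
  obtain ⟨w, hw⟩ := exists_isOptimalProfile hε hα.2 hWc ((hzeros b).2 (Or.inr rfl)) hWpos
    (hsub α hα b hb)
  have hnn : ∀ x, 0 ≤ (√(W x))⁻¹ := fun x => inv_nonneg.2 (sqrt_nonneg _)
  refine ⟨_, w, mul_nonneg hε.le (integral_nonneg hα.2 fun x _ => hnn x),
    mul_le_mul_of_nonneg_left ?_ hε.le, hw⟩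
  exact integral_mono_interval hα.1 hα.2 le_rfl (Eventually.of_forall hnn)
    (hsub a ⟨le_rfl, hb.1⟩ b hb)

theorem dW_eq_integral {W : ℝ → ℝ} {r s : ℝ} (hrs : r ≤ s) :
    dW W r s = ∫ ρ in r..s, 2 * √(W ρ) :=
  abs_of_nonneg (integral_nonneg hrs fun _ _ => by positivity)

theorem one_dim_minimizer_energy_bound_general (W ω : ℝ → ℝ) (a b T ε αε βε : ℝ)
    (hT : 0 < T) (hε : 0 < ε)
    (hWc : Continuous W) (hWnn : ∀ x, 0 ≤ W x)
    (hzeros : ∀ x, W x = 0 ↔ x = a ∨ x = b)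
    (hint : IntervalIntegrable (fun s => (Real.sqrt (W s))⁻¹) volume a b)
    (hωc : ContinuousOn ω (Icc 0 T))
    (hαε : αε ∈ Icc a b) (hβε : βε ∈ Icc a b)
    (hfit : 2 * ε * ∫ s in a..b, (Real.sqrt (W s))⁻¹ < T) :
    ∀ v, Adm T αε βε v → (∀ u, Adm T αε βε u → En W ω ε T v ≤ En W ω ε T u) →
      En W ω ε T v ≤ ε * sSup (ω '' Icc 0 T) * (dW W αε b + dW W βε b) := by
  intro v _ hmin
  obtain ⟨L₁, w₁, hL₁, hL₁T, hw₁⟩ :=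
    exists_isOptimalProfile_of_mem_Icc hε hWc hWnn hzeros hint hαε
  obtain ⟨L₂, w₂, hL₂, hL₂T, hw₂⟩ :=
    exists_isOptimalProfile_of_mem_Icc hε hWc hWnn hzeros hint hβε
  obtain ⟨c, hc⟩ : (Ioo L₁ (T - L₂)).Nonempty := nonempty_Ioo.2 (by linarith)
  have hu0 : glueProfiles c T w₁ w₂ 0 = αε :=
    (glueProfiles_of_le (hL₁.trans hc.1.le)).trans hw₁.apply_zero
  have huT : glueProfiles c T w₁ w₂ T = βε := by
    rw [glueProfiles_of_lt (by linarith [hc.2]), sub_self, hw₂.apply_zero]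
  set u := glueProfiles c T w₁ w₂
  have huc : Continuous u := continuous_glueProfiles hw₁ hw₂ hc
  have hequi : IsEquipartition W ε T u :=
    isEquipartition_glueProfiles hε.ne' hWnn ((hzeros b).2 (Or.inr rfl)) hw₁ hw₂ hc
  calc En W ω ε T v ≤ En W ω ε T u := hmin u (hequi.adm hε.ne' hT.le hWc huc hu0 huT)
    _ ≤ sSup (ω '' Icc 0 T) * ∫ t in (0:ℝ)..T, 2 * W (u t) :=
      hequi.en_le_sSup_mul hT.le hWc hWnn hωc huc
    _ = ε * sSup (ω '' Icc 0 T) * (dW W αε b + dW W βε b) := by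
      rw [integral_glueProfiles hε hWc hWnn hw₁ hw₂ hL₁ hL₂ hc, dW_eq_integral hαε.2,
        dW_eq_integral hβε.2]
      ring

theorem one_dim_minimizer_energy_bound (W ω : ℝ → ℝ) (a b T ε αε βε : ℝ)
    (hab : a < b) (hT : 0 < T) (hε : 0 < ε)
    (hWc : Continuous W) (hWnn : ∀ x, 0 ≤ W x)
    (hzeros : ∀ x, W x = 0 ↔ x = a ∨ x = b)
    (hint : IntervalIntegrable (fun s => (Real.sqrt (W s))⁻¹) volume a b)
    (hωc : ContinuousOn ω (Icc 0 T)) (hωpos : ∀ t ∈ Icc 0 T, 0 < ω t)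
    (hαε : αε ∈ Icc a b) (hβε : βε ∈ Icc a b)
    (hfit : 2 * ε * ∫ s in a..b, (Real.sqrt (W s))⁻¹ < T) :
    ∀ v, Adm T αε βε v → (∀ u, Adm T αε βε u → En W ω ε T v ≤ En W ω ε T u) →
      En W ω ε T v ≤ ε * sSup (ω '' Icc 0 T) * (dW W αε b + dW W βε b) :=
  one_dim_minimizer_energy_bound_general W ω a b T ε αε βε hT hε hWc hWnn hzeros hint hωc hαε hβε
    hfit
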